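/- Let μ be a shift-invariant probability measure on A* and x ∈ A^ω satisfy aligned normality for μ: for every ℓ and every w ∈ A^ℓ, lim_{n→∞} alocc(x[1..nℓ], w)/n = μ(w). Then the shifted sequence σ(x) also satisfies aligned normality for μ. -/

import Mathlib

open Filter

/-- Number of aligned occurrences of `u` in `w` (positions `i ≡ 1 (mod |u|)`),
positions numbered from 1. -/
def alocc {A : Type*} [DecidableEq A] (w u : List A) : ℕ :=
  ((Finset.Icc 1 (w.length + 1 - u.length)).filter
    (fun i => (w.drop (i - 1)).take u.length = u ∧ i % u.length = 1 % u.length)).card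

/-- Prefix `x[1..n]` of an infinite sequence. -/
def wordPrefix {A : Type*} (x : ℕ → A) (n : ℕ) : List A := (List.range n).map x

/-- Aligned normality of `x` with respect to the measure `μ`. -/
def AlignedNormal {A : Type*} [DecidableEq A] (μ : List A → ℝ) (x : ℕ → A) : Prop :=
  ∀ ℓ : ℕ, 1 ≤ ℓ → ∀ w : Fin ℓ → A,
    Tendsto (fun n : ℕ => (alocc (wordPrefix x (n * ℓ)) (List.ofFn w) : ℝ) / n)
      atTop (nhds (μ (List.ofFn w)))

/-!
Occurrences of `w` in `σ(x)` at the aligned positions `jℓ` are occurrences in `x` at the positions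
`jℓ + 1`. Cut `x` into aligned blocks of length `(m + 1)ℓ`: of the `m + 1` windows at positions
`jℓ + 1` starting in a block, the first `m` lie inside it, at the offsets `sℓ + 1`. The frequency of
`w` at a fixed offset `p` inside aligned blocks of length `B` is a finite sum of aligned frequencies
of the blocks `f w b` with `|f| = p`, so it tends to `∑ μ(f w b) = μ(w)` by shift invariance. The
last window of each block straddles two blocks and changes the frequency by at most `1/(m + 1)`;
now let `m → ∞`.
-/

open Finset Topology

lemma Fin.append_eq_append_iff {α : Type*} {m n : ℕ} {a c : Fin m → α} {b d : Fin n → α} :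
    Fin.append a b = Fin.append c d ↔ a = c ∧ b = d :=
  ((Fin.appendEquiv m n).injective.eq_iff (a := (a, b)) (b := (c, d))).trans Prod.ext_iff

lemma Nat.sub_one_div_mul_add_one {i ℓ : ℕ} (hi : 1 ≤ i) (h : i % ℓ = 1 % ℓ) :
    (i - 1) / ℓ * ℓ + 1 = i := by
  rw [Nat.div_mul_cancel (Nat.dvd_of_mod_eq_zero (Nat.sub_mod_eq_zero_of_mod_eq h))]
  omega

lemma tendsto_of_forall_eventually_between {α : Type*} {l : Filter α} {f : α → ℝ} {a b : ℕ → ℝ}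
    {c : ℝ} (ha : Tendsto a atTop (𝓝 c)) (hb : Tendsto b atTop (𝓝 c))
    (h : ∀ m, ∀ ε > 0, ∀ᶠ n in l, a m - ε < f n ∧ f n < b m + ε) : Tendsto f l (𝓝 c) := by
  refine tendsto_order.2 ⟨fun c' hc' => ?_, fun c' hc' => ?_⟩
  · obtain ⟨m, hm⟩ := (ha.eventually (lt_mem_nhds hc')).exists
    filter_upwards [h m (a m - c') (by linarith)] with n hn
    linarith [hn.1]
  · obtain ⟨m, hm⟩ := (hb.eventually (gt_mem_nhds hc')).exists
    filter_upwards [h m (c' - b m) (by linarith)] with n hn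
    linarith [hn.2]

lemma tendsto_comp_div_add_div {u : ℕ → ℝ} {α : ℝ}
    (hu : Tendsto (fun q : ℕ => u q / q) atTop (𝓝 α)) {K : ℕ} (hK : 0 < K) (j : ℕ) :
    Tendsto (fun n : ℕ => u (n / K + j) / n) atTop (𝓝 (α / K)) := by
  have hK' : (0 : ℝ) < K := Nat.cast_pos.2 hK
  have hy : Tendsto (fun n : ℕ => (n : ℝ) / K) atTop atTop :=
    tendsto_natCast_atTop_atTop.atTop_div_const hK'
  have hr : Tendsto (fun n : ℕ => ((n / K + j : ℕ) : ℝ) / n) atTop (𝓝 (1 / K)) := by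
    have := ((tendsto_nat_floor_div_atTop.comp hy).add
      ((tendsto_const_nhds (x := (j : ℝ))).div_atTop hy)).div_const (K : ℝ)
    rw [add_zero] at this
    refine this.congr' ((eventually_gt_atTop 0).mono fun n hn => ?_)
    have hn' : (0 : ℝ) < n := Nat.cast_pos.2 hn
    simp only [Function.comp, Nat.floor_div_eq_div, Nat.cast_add]
    field_simp
  have hq : Tendsto (fun n : ℕ => n / K + j) atTop atTop :=
    tendsto_atTop_mono (fun n => Nat.le_add_right _ j) (Nat.tendsto_div_const_atTop hK.ne')
  have := (hu.comp hq).mul hr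
  rw [mul_one_div] at this
  refine this.congr' ((eventually_ge_atTop K).mono fun n hn => ?_)
  have : (0 : ℝ) < (n / K + j : ℕ) := Nat.cast_pos.2 (by have := Nat.div_pos hn hK; omega)
  simp only [Function.comp]
  field_simp

lemma eventually_between_of_block_bounds {N L U : ℕ → ℝ} (hN : Monotone N) {K : ℕ} (hK : 0 < K)
    {α β : ℝ} (hL : Tendsto (fun q : ℕ => L q / q) atTop (𝓝 α))
    (hU : Tendsto (fun q : ℕ => U q / q) atTop (𝓝 β)) (hLN : ∀ q, L q ≤ N (q * K))
    (hNU : ∀ q, N (q * K) ≤ U q) {ε : ℝ} (hε : 0 < ε) :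
    ∀ᶠ n : ℕ in atTop, α / K - ε < N n / n ∧ N n / n < β / K + ε := by
  filter_upwards [(tendsto_comp_div_add_div hL hK 0).eventually (lt_mem_nhds (sub_lt_self _ hε)),
    (tendsto_comp_div_add_div hU hK 1).eventually (gt_mem_nhds (lt_add_of_pos_right _ hε)),
    eventually_gt_atTop 0] with n hl hu hn
  have hn' : (0 : ℝ) < n := Nat.cast_pos.2 hn
  refine ⟨hl.trans_le ?_, lt_of_le_of_lt ?_ hu⟩ <;> gcongr
  · exact (hLN _).trans (hN (Nat.div_mul_le_self n K))
  · refine (hN ?_).trans (hNU (n / K + 1))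
    rw [add_one_mul]
    exact (Nat.lt_div_mul_add hK).le

section

variable {A : Type*}

def window (x : ℕ → A) (s ℓ : ℕ) : Fin ℓ → A := fun i => x (s + i)

lemma window_add (x : ℕ → A) (s m n : ℕ) :
    window x s (m + n) = Fin.append (window x s m) (window x (s + m) n) := by
  funext i
  refine Fin.addCases (fun i => ?_) (fun i => ?_) i <;> simp [window, add_assoc]

lemma window_shift (x : ℕ → A) (s ℓ : ℕ) :
    window (fun n => x (n + 1)) s ℓ = window x (s + 1) ℓ := by
  funext i
  exact congrArg x (add_right_comm _ _ _)

lemma wordPrefix_drop_take (x : ℕ → A) {s ℓ N : ℕ} (h : s + ℓ ≤ N) :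
    ((wordPrefix x N).drop s).take ℓ = List.ofFn (window x s ℓ) := by
  apply List.ext_getElem
  · simp [wordPrefix]; omega
  · intro i _ _
    simp [wordPrefix, window]

section ShiftInvariant

variable {M : Type*} [AddCommMonoid M] [Fintype A] (μ : List A → M)

lemma sum_ofFn_append (hinv : ∀ w, ∑ a : A, μ (a :: w) = μ w) (k : ℕ) (v : List A) :
    ∑ f : Fin k → A, μ (List.ofFn f ++ v) = μ v := by
  induction k with
  | zero => simp
  | succ k ih =>
    rw [← (Fin.consEquiv fun _ => A).sum_comp, Fintype.sum_prod_type, sum_comm]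
    simp [List.ofFn_succ, hinv, ih]

lemma sum_append_ofFn (hext : ∀ w, ∑ a : A, μ (w ++ [a]) = μ w) (k : ℕ) (v : List A) :
    ∑ f : Fin k → A, μ (v ++ List.ofFn f) = μ v := by
  induction k generalizing v with
  | zero => simp
  | succ k ih =>
    rw [← (Fin.consEquiv fun _ => A).sum_comp, Fintype.sum_prod_type]
    simp [List.ofFn_succ, ← hext v, ← ih (v ++ [_])]

lemma sum_ofFn_append_append (hinv : ∀ w, ∑ a : A, μ (a :: w) = μ w)
    (hext : ∀ w, ∑ a : A, μ (w ++ [a]) = μ w) (p q : ℕ) {ℓ : ℕ} (w : Fin ℓ → A) :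
    ∑ f : Fin p → A, ∑ b : Fin q → A, μ (List.ofFn (Fin.append (Fin.append f w) b)) =
      μ (List.ofFn w) := by
  simp only [List.ofFn_fin_append, sum_append_ofFn μ hext, sum_ofFn_append μ hinv]

end ShiftInvariant

variable [DecidableEq A]

def gridCount (x : ℕ → A) (B p : ℕ) {ℓ : ℕ} (w : Fin ℓ → A) (n : ℕ) : ℕ :=
  #{k ∈ range n | window x (k * B + p) ℓ = w}

lemma gridCount_le (x : ℕ → A) (B p : ℕ) {ℓ : ℕ} (w : Fin ℓ → A) (n : ℕ) :
    gridCount x B p w n ≤ n :=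
  (card_filter_le _ _).trans (card_range n).le

lemma gridCount_mono (x : ℕ → A) (B p : ℕ) {ℓ : ℕ} (w : Fin ℓ → A) :
    Monotone (gridCount x B p w) := fun _ _ h =>
  card_le_card (filter_subset_filter _ (range_subset_range.2 h))

lemma gridCount_shift (x : ℕ → A) (B p : ℕ) {ℓ : ℕ} (w : Fin ℓ → A) (n : ℕ) :
    gridCount (fun n => x (n + 1)) B p w n = gridCount x B (p + 1) w n := by
  simp only [gridCount, window_shift, add_assoc]

lemma gridCount_mul (x : ℕ → A) (ℓ p K q : ℕ) (w : Fin ℓ → A) :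
    gridCount x ℓ p w (q * K) = ∑ s ∈ range K, gridCount x (K * ℓ) (s * ℓ + p) w q := by
  simp only [gridCount, card_filter]
  rw [sum_comm]
  induction q with
  | zero => simp
  | succ q ih =>
    rw [add_mul, one_mul, sum_range_add, ih, sum_range_succ _ q]
    congr 1
    refine sum_congr rfl fun s _ => ?_
    ring_nf

lemma gridCount_eq_sum_append [Fintype A] (x : ℕ → A) (p q : ℕ) {ℓ : ℕ} (w : Fin ℓ → A) (n : ℕ) :
    gridCount x (p + ℓ + q) p w n =
      ∑ f : Fin p → A, ∑ b : Fin q → A,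
        gridCount x (p + ℓ + q) 0 (Fin.append (Fin.append f w) b) n := by
  rw [gridCount, card_eq_sum_card_fiberwise (t := univ)
    (f := fun k => (window x (k * (p + ℓ + q)) p, window x (k * (p + ℓ + q) + (p + ℓ)) q))
    (fun _ _ => mem_univ _), Fintype.sum_prod_type]
  simp only [filter_filter]
  refine sum_congr rfl fun f _ => sum_congr rfl fun b _ =>
    congrArg card (filter_congr fun k _ => ?_)
  rw [add_zero, window_add, window_add, Fin.append_eq_append_iff, Fin.append_eq_append_iff,
    Prod.mk.injEq]
  tauto

/-- `alocc` numbers positions from `1`, `window` from `0`: the aligned occurrence at `i = jℓ + 1`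
is the window starting at `jℓ`. -/
lemma alocc_wordPrefix_mul (x : ℕ → A) {ℓ : ℕ} (hℓ : 0 < ℓ) (w : Fin ℓ → A) (n : ℕ) :
    alocc (wordPrefix x (n * ℓ)) (List.ofFn w) = gridCount x ℓ 0 w n := by
  have hlt (j : ℕ) : j < n ↔ j * ℓ + ℓ ≤ n * ℓ := by
    rw [← Nat.succ_mul, Nat.mul_le_mul_right_iff hℓ]; rfl
  unfold alocc gridCount
  rw [show (wordPrefix x (n * ℓ)).length = n * ℓ by simp [wordPrefix], List.length_ofFn]
  symm
  apply card_nbij' (fun j => j * ℓ + 1) (fun i => (i - 1) / ℓ)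
  · intro j hj
    obtain ⟨hjn, hw⟩ := mem_filter.1 hj
    have hjℓ := (hlt j).1 (mem_range.1 hjn)
    dsimp only
    refine mem_filter.2 ⟨mem_Icc.2 ⟨by omega, by omega⟩, ?_, ?_⟩
    · rw [Nat.add_sub_cancel, wordPrefix_drop_take x hjℓ, ← hw, add_zero]
    · simp
  · intro i hmem
    obtain ⟨hIcc, hw, hmod⟩ := mem_filter.1 hmem
    obtain ⟨hi1, hi2⟩ := mem_Icc.1 hIcc
    have hi := Nat.sub_one_div_mul_add_one hi1 hmod
    have hj : (i - 1) / ℓ < n := (hlt _).2 (by omega)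
    refine mem_filter.2 ⟨mem_range.2 hj, ?_⟩
    rw [add_zero, ← List.ofFn_inj, ← wordPrefix_drop_take x ((hlt _).1 hj), ← hw]
    congr 2
    omega
  · intro j _
    simp [Nat.mul_div_cancel _ hℓ]
  · intro i hmem
    obtain ⟨hIcc, -, hmod⟩ := mem_filter.1 hmem
    exact Nat.sub_one_div_mul_add_one (mem_Icc.1 hIcc).1 hmod

namespace AlignedNormal

variable {μ : List A → ℝ} {x : ℕ → A}

lemma tendsto_gridCount_zero (hx : AlignedNormal μ x) {B : ℕ} (hB : 0 < B) (u : Fin B → A) :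
    Tendsto (fun n : ℕ => (gridCount x B 0 u n : ℝ) / n) atTop (𝓝 (μ (List.ofFn u))) := by
  simpa only [alocc_wordPrefix_mul x hB] using hx B hB u

variable [Fintype A]

lemma tendsto_gridCount (hx : AlignedNormal μ x) (hinv : ∀ w, ∑ a : A, μ (a :: w) = μ w)
    (hext : ∀ w, ∑ a : A, μ (w ++ [a]) = μ w) {B p ℓ : ℕ} (hB : 0 < B) (hp : p + ℓ ≤ B)
    (w : Fin ℓ → A) :
    Tendsto (fun n : ℕ => (gridCount x B p w n : ℝ) / n) atTop (𝓝 (μ (List.ofFn w))) := by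
  obtain ⟨q, rfl⟩ := Nat.exists_eq_add_of_le hp
  simp_rw [gridCount_eq_sum_append, Nat.cast_sum, sum_div]
  rw [← sum_ofFn_append_append μ hinv hext p q w]
  exact tendsto_finsetSum _ fun f _ => tendsto_finsetSum _ fun b _ =>
    hx.tendsto_gridCount_zero hB _

lemma eventually_gridCount_one_div_between (hx : AlignedNormal μ x)
    (hinv : ∀ w, ∑ a : A, μ (a :: w) = μ w) (hext : ∀ w, ∑ a : A, μ (w ++ [a]) = μ w) {ℓ : ℕ}
    (hℓ : 0 < ℓ) (w : Fin ℓ → A) (m : ℕ) {ε : ℝ} (hε : 0 < ε) :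
    ∀ᶠ n : ℕ in atTop,
      m * μ (List.ofFn w) / (m + 1) - ε < (gridCount x ℓ 1 w n : ℝ) / n ∧
      (gridCount x ℓ 1 w n : ℝ) / n < (m * μ (List.ofFn w) + 1) / (m + 1) + ε := by
  set S : ℕ → ℝ := fun q => ∑ s ∈ range m, (gridCount x ((m + 1) * ℓ) (s * ℓ + 1) w q : ℝ)
  have hS : Tendsto (fun q : ℕ => S q / q) atTop (𝓝 (m * μ (List.ofFn w))) := by
    simp only [S, sum_div]
    simpa using tendsto_finsetSum (range m) fun s hs =>
      hx.tendsto_gridCount hinv hext (by positivity) (p := s * ℓ + 1) (by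
        have := Nat.mul_le_mul_right ℓ (mem_range.1 hs)
        nlinarith) w
  have hS1 : Tendsto (fun q : ℕ => (S q + q) / q) atTop (𝓝 (m * μ (List.ofFn w) + 1)) :=
    (hS.add tendsto_const_nhds).congr' ((eventually_gt_atTop 0).mono fun q hq => by
      field_simp)
  have hsplit (q : ℕ) : (gridCount x ℓ 1 w (q * (m + 1)) : ℝ) =
      S q + gridCount x ((m + 1) * ℓ) (m * ℓ + 1) w q := by
    rw [gridCount_mul, sum_range_succ, Nat.cast_add, Nat.cast_sum]
  simpa using eventually_between_of_block_bounds (N := fun n => (gridCount x ℓ 1 w n : ℝ))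
    (fun a b h => Nat.cast_le.2 (gridCount_mono _ _ _ _ h)) (Nat.succ_pos m) hS hS1
    (fun q => by rw [hsplit]; simp) (fun q => by
      rw [hsplit]; gcongr; exact_mod_cast gridCount_le _ _ _ _ _) hε

lemma tendsto_gridCount_one (hx : AlignedNormal μ x) (hinv : ∀ w, ∑ a : A, μ (a :: w) = μ w)
    (hext : ∀ w, ∑ a : A, μ (w ++ [a]) = μ w) {ℓ : ℕ} (hℓ : 0 < ℓ) (w : Fin ℓ → A) :
    Tendsto (fun n : ℕ => (gridCount x ℓ 1 w n : ℝ) / n) atTop (𝓝 (μ (List.ofFn w))) := by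
  have hm : Tendsto (fun m : ℕ => (m : ℝ) / (m + 1)) atTop (𝓝 1) :=
    tendsto_natCast_div_add_atTop 1
  refine tendsto_of_forall_eventually_between ?_ ?_ fun m ε hε =>
    hx.eventually_gridCount_one_div_between hinv hext hℓ w m hε
  · simpa [mul_div_right_comm] using hm.mul_const (μ (List.ofFn w))
  · simpa [add_div, mul_div_right_comm] using
      (hm.mul_const (μ (List.ofFn w))).add tendsto_one_div_add_atTop_nhds_zero_nat

end AlignedNormal

end

theorem alignedNormal_shift_general {A : Type*} [Fintype A] [DecidableEq A]
    (μ : List A → ℝ)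
    (hext : ∀ w, ∑ a : A, μ (w ++ [a]) = μ w)
    (hinv : ∀ w, ∑ a : A, μ (a :: w) = μ w)
    (x : ℕ → A) (hx : AlignedNormal μ x) :
    AlignedNormal μ (fun n => x (n + 1)) := by
  intro ℓ hℓ w
  simpa only [alocc_wordPrefix_mul _ hℓ, gridCount_shift] using
    hx.tendsto_gridCount_one hinv hext hℓ w

/-- If `x` is aligned normal for a shift-invariant probability measure `μ`, then so is
the shifted sequence `σ(x)`. -/
theorem alignedNormal_shift {A : Type*} [Fintype A] [DecidableEq A]
    (μ : List A → ℝ)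
    (hrange : ∀ w, 0 ≤ μ w ∧ μ w ≤ 1)
    (hnil : μ [] = 1)
    (hext : ∀ w, ∑ a : A, μ (w ++ [a]) = μ w)
    (hinv : ∀ w, ∑ a : A, μ (a :: w) = μ w)
    (x : ℕ → A) (hx : AlignedNormal μ x) :
    AlignedNormal μ (fun n => x (n + 1)) :=
  alignedNormal_shift_general μ hext hinv x hx
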